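/- Let p be a prime, g ∈ F_p^* of order t, and A ⊆ F_p^* the subgroup generated by g. Then for any N ≤ t and λ with gcd(λ,p)=1, |Σ_{n=1}^{N} e_p(λ g^n)| ≪ p^{1/4} t^{−1/4} E₊(A,A)^{1/4} log t. -/

import Mathlib

open Finset

/-- The standard additive character of `ZMod p`. -/
noncomputable def ep (p : ℕ) (z : ZMod p) : ℂ :=
  Complex.exp (2 * Real.pi * Complex.I * (z.val : ℂ) / (p : ℂ))

/-!
Complete the sum over `1 ≤ n ≤ N` with the additive characters of `ZMod t`: it becomes
`t⁻¹ ∑ₖ Bₖ Sₖ`, where `Bₖ = ∑_{n ≤ N} e_t(kn)` is a geometric sum with `∑ₖ |Bₖ| ≪ t log t` and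
`Sₖ(ν) = ∑_{n mod t} e_t(-kn) e_p(ν gⁿ)` is a complete twisted sum. Replacing `ν` by `ν g` only
multiplies `Sₖ(ν)` by a root of unity, so `|Sₖ|` is constant on the `t` points of the orbit of `λ`
under `A = ⟨g⟩`, and `t |Sₖ(λ)|⁴ ≤ ∑_ν |Sₖ(ν)|⁴ ≤ p E₊(A, A)` by orthogonality of the characters
of `ZMod p`.
-/

open Real

theorem Real.mul_one_sub_le_sin_pi_mul {θ : ℝ} (h0 : 0 ≤ θ) (h1 : θ ≤ 1) :
    2 * θ * (1 - θ) ≤ sin (π * θ) := by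
  have jordan : ∀ s : ℝ, 0 ≤ s → s ≤ 1 / 2 → 2 * s ≤ sin (π * s) := fun s hs0 hs1 => by
    have := mul_le_sin (x := π * s) (by positivity) (by nlinarith [pi_pos])
    rwa [← mul_assoc, div_mul_cancel₀ _ pi_ne_zero] at this
  rcases le_or_gt θ (1 / 2) with hθ | hθ
  · nlinarith [jordan θ h0 hθ]
  · have := jordan (1 - θ) (by linarith) (by linarith)
    rw [show π * (1 - θ) = π - π * θ by ring, sin_pi_sub] at this
    nlinarith

theorem Complex.norm_sum_Icc_pow_le {z : ℂ} (hz : ‖z‖ = 1) (hz1 : z ≠ 1) (N : ℕ) :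
    ‖∑ m ∈ Icc 1 N, z ^ m‖ ≤ 2 / ‖z - 1‖ := by
  rw [← Ico_add_one_right_eq_Icc, geom_sum_Ico hz1 (by omega), norm_div, pow_one]
  gcongr
  calc ‖z ^ (N + 1) - z‖ ≤ ‖z ^ (N + 1)‖ + ‖z‖ := norm_sub_le _ _
    _ = 2 := by rw [norm_pow, hz, one_pow]; norm_num

theorem sum_Ico_one_div_le_one_add_log (t : ℕ) :
    ∑ n ∈ Ico 1 t, (1 / n : ℝ) ≤ 1 + log t := by
  calc ∑ n ∈ Ico 1 t, (1 / n : ℝ) ≤ ∑ n ∈ Icc 1 t, (1 / n : ℝ) :=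
        sum_le_sum_of_subset_of_nonneg Ico_subset_Icc_self fun _ _ _ => by positivity
    _ = harmonic t := by simp [harmonic_eq_sum_Icc]
    _ ≤ 1 + log t := harmonic_le_one_add_log t

theorem Set.InjOn.card_filter_add_eq_le {ι α : Type*} [Add α] [DecidableEq α] {s : Finset ι}
    {x : ι → α} (hx : Set.InjOn x s) (y : α) :
    #{ij ∈ s ×ˢ s | x ij.1 + x ij.2 = y} ≤ #{ab ∈ s.image x ×ˢ s.image x | ab.1 + ab.2 = y} := by
  refine card_le_card_of_injOn (Prod.map x x) (fun ij hij => ?_) fun ij hij ij' hij' h => ?_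
  · simp only [coe_filter, mem_product, Set.mem_ofPred_eq] at hij ⊢
    exact ⟨⟨Finset.mem_image_of_mem x hij.1.1, Finset.mem_image_of_mem x hij.1.2⟩, hij.2⟩
  · simp only [coe_filter, mem_product, Set.mem_ofPred_eq] at hij hij'
    obtain ⟨h1, h2⟩ := Prod.ext_iff.mp h
    exact Prod.ext (hx hij.1.1 hij'.1.1 h1) (hx hij.1.2 hij'.1.2 h2)

namespace AddChar

variable {R : Type*} [CommRing R] [Fintype R] [DecidableEq R] {ψ : AddChar R ℂ}

theorem IsPrimitive.sum_norm_sum_mul_sq (hψ : ψ.IsPrimitive) (c : R → ℂ) :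
    ∑ ν, ‖∑ x, c x * ψ (ν * x)‖ ^ 2 = Fintype.card R * ∑ x, ‖c x‖ ^ 2 := by
  have norm_sq : ∀ z : ℂ, ((‖z‖ ^ 2 : ℝ) : ℂ) = z * starRingEnd ℂ z := fun z => by
    rw [Complex.mul_conj, Complex.normSq_eq_norm_sq]
  have orthogonality : ∀ x y, ∑ ν, c x * ψ (ν * x) * (starRingEnd ℂ (c y) * ψ (-(ν * y)))
      = c x * starRingEnd ℂ (c y) * ((if x - y = 0 then Fintype.card R else 0 : ℕ) : ℂ) :=
    fun x y => by
      rw [← sum_mulShift (x - y) hψ, mul_sum]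
      refine sum_congr rfl fun ν _ => ?_
      rw [mul_sub, sub_eq_add_neg, map_add_eq_mul]
      ring
  apply Complex.ofReal_injective
  simp only [Complex.ofReal_sum, Complex.ofReal_mul, Complex.ofReal_natCast, norm_sq, map_sum,
    map_mul, ← map_neg_eq_conj, sum_mul_sum]
  rw [sum_comm, mul_sum]
  refine sum_congr rfl fun x _ => ?_
  rw [sum_comm]
  simp only [orthogonality, sub_eq_zero, Nat.cast_ite, Nat.cast_zero, mul_ite, mul_zero,
    sum_ite_eq, mem_univ, if_true]
  ring

theorem IsPrimitive.sum_norm_sum_mul_pow_four_le {ι : Type*} (hψ : ψ.IsPrimitive) (s : Finset ι)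
    {x : ι → R} (hx : Set.InjOn x s) (w : ι → ℂ) (hw : ∀ i ∈ s, ‖w i‖ ≤ 1) :
    ∑ ν, ‖∑ i ∈ s, w i * ψ (ν * x i)‖ ^ 4
      ≤ Fintype.card R * addEnergy (s.image x) (s.image x) := by
  set c : R → ℂ := fun y => ∑ ij ∈ s ×ˢ s with x ij.1 + x ij.2 = y, w ij.1 * w ij.2
  have sum_sq : ∀ ν, (∑ i ∈ s, w i * ψ (ν * x i)) ^ 2 = ∑ y, c y * ψ (ν * y) := fun ν => by
    rw [sq, sum_mul_sum, ← sum_product', ← sum_fiberwise (s ×ˢ s) (fun ij => x ij.1 + x ij.2)]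
    refine sum_congr rfl fun y _ => ?_
    rw [sum_mul]
    refine sum_congr rfl fun ij hij => ?_
    rw [← (mem_filter.mp hij).2, mul_add, map_add_eq_mul]
    ring
  have norm_c : ∀ y, ‖c y‖ ≤ #{ij ∈ s ×ˢ s | x ij.1 + x ij.2 = y} := fun y => by
    refine (norm_sum_le _ _).trans ?_
    rw [card_eq_sum_ones, Nat.cast_sum, Nat.cast_one]
    refine sum_le_sum fun ij hij => ?_
    obtain ⟨hi, hj⟩ := mem_product.mp (mem_filter.mp hij).1
    rw [norm_mul]
    exact mul_le_one₀ (hw _ hi) (norm_nonneg _) (hw _ hj)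
  calc ∑ ν, ‖∑ i ∈ s, w i * ψ (ν * x i)‖ ^ 4
      = ∑ ν, ‖∑ y, c y * ψ (ν * y)‖ ^ 2 := by simp_rw [← sum_sq, norm_pow, ← pow_mul]
    _ = Fintype.card R * ∑ y, ‖c y‖ ^ 2 := hψ.sum_norm_sum_mul_sq c
    _ ≤ Fintype.card R * ∑ y, (#{ab ∈ s.image x ×ˢ s.image x | ab.1 + ab.2 = y} : ℝ) ^ 2 := by
        gcongr with y
        exact (norm_c y).trans (Nat.cast_le.mpr (hx.card_filter_add_eq_le y))
    _ = Fintype.card R * addEnergy (s.image x) (s.image x) := by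
        rw [addEnergy_eq_sum_sq]; push_cast; rfl

end AddChar

namespace ZMod

variable {t : ℕ}

theorem sum_univ_eq_sum_range [NeZero t] {M : Type*} [AddCommMonoid M] (F : ZMod t → M) :
    ∑ k, F k = ∑ n ∈ range t, F n :=
  sum_nbij' val Nat.cast (fun k _ => mem_range.mpr k.val_lt) (fun _ _ => mem_univ _)
    (fun k _ => natCast_zmod_val k) (fun _ hn => val_cast_of_lt (mem_range.mp hn))
    (fun k _ => by rw [natCast_zmod_val])

theorem image_pow_val [NeZero t] {M : Type*} [Monoid M] [DecidableEq M] (u : M) :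
    univ.image (fun j : ZMod t => u ^ j.val) = (range t).image (u ^ ·) := by
  ext a
  simp only [mem_image, mem_univ, true_and, mem_range]
  exact ⟨fun ⟨j, hj⟩ => ⟨j.val, j.val_lt, hj⟩,
    fun ⟨n, hn, hna⟩ => ⟨n, by rwa [val_cast_of_lt hn]⟩⟩

theorem pow_val_add [NeZero t] {M : Type*} [Monoid M] {u : M} (hu : u ^ t = 1) (a b : ZMod t) :
    u ^ (a + b).val = u ^ a.val * u ^ b.val := by
  rw [val_add, ← pow_eq_pow_mod _ hu, pow_add]

theorem pow_val_natCast {M : Type*} [Monoid M] {u : M} (hu : u ^ t = 1) (n : ℕ) :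
    u ^ (n : ZMod t).val = u ^ n := by
  rw [val_natCast, ← pow_eq_pow_mod _ hu]

variable [NeZero t]

theorem norm_stdAddChar_sub_one (k : ZMod t) :
    ‖stdAddChar k - 1‖ = 2 * sin (π * k.val / t) := by
  have arg : 2 * π * Complex.I * k.val / t = Complex.I * ((2 * (π * k.val / t) : ℝ) : ℂ) := by
    push_cast; ring
  have arg_le : π * k.val / t ≤ π := by
    rw [div_le_iff₀ (Nat.cast_pos.mpr (NeZero.pos t))]
    gcongr
    exact_mod_cast k.val_lt.le
  rw [stdAddChar_apply, toCircle_apply, arg, Complex.norm_exp_I_mul_ofReal_sub_one,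
    mul_div_cancel_left₀ _ two_ne_zero, norm_mul, Real.norm_two,
    Real.norm_of_nonneg (sin_nonneg_of_nonneg_of_le_pi (by positivity) arg_le)]

theorem norm_sum_Icc_stdAddChar_mul_le {k : ZMod t} (hk : k ≠ 0) (N : ℕ) :
    ‖∑ m ∈ Icc 1 N, stdAddChar (k * (m : ZMod t))‖ ≤ t / 2 * (1 / k.val + 1 / (t - k.val)) := by
  have ht : (0 : ℝ) < t := Nat.cast_pos.mpr (NeZero.pos t)
  have hk0 : (0 : ℝ) < k.val := Nat.cast_pos.mpr (val_pos.mpr hk)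
  have hkt : (k.val : ℝ) < t := Nat.cast_lt.mpr k.val_lt
  set θ : ℝ := k.val / t
  have hθ0 : 0 < θ := div_pos hk0 ht
  have hθ1 : θ < 1 := (div_lt_one ht).mpr hkt
  have hz1 : stdAddChar k ≠ 1 := by
    rwa [← AddChar.map_zero_eq_one (stdAddChar (N := t)), injective_stdAddChar.ne_iff]
  have dist_one : 4 * θ * (1 - θ) ≤ ‖stdAddChar k - 1‖ := by
    rw [norm_stdAddChar_sub_one, mul_div_assoc]
    linarith [mul_one_sub_le_sin_pi_mul hθ0.le hθ1.le]
  calc ‖∑ m ∈ Icc 1 N, stdAddChar (k * (m : ZMod t))‖ = ‖∑ m ∈ Icc 1 N, stdAddChar k ^ m‖ := by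
        simp_rw [mul_comm k, ← nsmul_eq_mul, AddChar.map_nsmul_eq_pow]
    _ ≤ 2 / ‖stdAddChar k - 1‖ := Complex.norm_sum_Icc_pow_le (AddChar.norm_apply _ _) hz1 N
    _ ≤ 2 / (4 * θ * (1 - θ)) := by gcongr
    _ = t / 2 * (1 / k.val + 1 / (t - k.val)) := by
        have : (t : ℝ) - k.val ≠ 0 := by linarith
        simp only [θ]
        field_simp
        ring

theorem sum_norm_sum_Icc_stdAddChar_mul_le {N : ℕ} (hN : N ≤ t) :
    ∑ k : ZMod t, ‖∑ m ∈ Icc 1 N, stdAddChar (k * (m : ZMod t))‖ ≤ t * (2 + log t) := by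
  rw [sum_univ_eq_sum_range, range_eq_Ico, sum_eq_sum_Ico_succ_bot (NeZero.pos t)]
  have zero_term : ‖∑ m ∈ Icc 1 N, stdAddChar (((0 : ℕ) : ZMod t) * (m : ZMod t))‖ ≤ t := by
    simp [hN]
  have reflect : ∑ n ∈ Ico 1 t, (1 / (t - n : ℕ) : ℝ) = ∑ n ∈ Ico 1 t, (1 / n : ℝ) := by
    simpa using sum_Ico_reflect (fun n => (1 / n : ℝ)) 1 (Nat.le_succ t)
  have nonzero_terms : ∑ n ∈ Ico 1 t, ‖∑ m ∈ Icc 1 N, stdAddChar ((n : ZMod t) * (m : ZMod t))‖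
      ≤ t * ∑ n ∈ Ico 1 t, (1 / n : ℝ) := by
    calc _ ≤ ∑ n ∈ Ico 1 t, (t / 2 * (1 / n + 1 / (t - n : ℕ)) : ℝ) := by
          refine sum_le_sum fun n hn => ?_
          obtain ⟨h1, h2⟩ := mem_Ico.mp hn
          have := norm_sum_Icc_stdAddChar_mul_le (k := (n : ZMod t)) ?_ N
          · rwa [val_cast_of_lt h2, ← Nat.cast_sub h2.le] at this
          · rw [ne_eq, ← val_eq_zero, val_cast_of_lt h2]; omega
      _ = t * ∑ n ∈ Ico 1 t, (1 / n : ℝ) := by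
          rw [← mul_sum, sum_add_distrib, reflect]; ring
  nlinarith [sum_Ico_one_div_le_one_add_log t]

theorem norm_sum_le_of_norm_dft_le (Φ : ZMod t → ℂ) {M : ℝ} (hM : ∀ k, ‖𝓕 Φ k‖ ≤ M)
    (s : Finset ℕ) :
    ‖∑ m ∈ s, Φ m‖ ≤ M / t * ∑ k : ZMod t, ‖∑ m ∈ s, stdAddChar (k * (m : ZMod t))‖ := by
  have inversion : ∑ m ∈ s, Φ m
      = (t : ℂ)⁻¹ * ∑ k, (∑ m ∈ s, stdAddChar (k * (m : ZMod t))) * 𝓕 Φ k := by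
    conv_lhs => rw [← dft.symm_apply_apply Φ]
    simp only [invDFT_apply, smul_eq_mul, ← mul_sum, sum_mul]
    rw [sum_comm]
  have hM0 : 0 ≤ M := (norm_nonneg _).trans (hM 0)
  rw [inversion, norm_mul, norm_inv, Complex.norm_natCast, div_eq_inv_mul, mul_assoc]
  gcongr
  refine (norm_sum_le _ _).trans ?_
  rw [mul_sum]
  gcongr with k
  rw [norm_mul, mul_comm]
  gcongr
  exact hM k

end ZMod

section TwistedOrbitSum

variable {R : Type*} [CommRing R] {t : ℕ} [NeZero t]

noncomputable def twistedOrbitSum (ψ : AddChar R ℂ) (χ : AddChar (ZMod t) ℂ) (u μ : R) : ℂ :=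
  ∑ j, χ j * ψ (μ * u ^ j.val)

variable (χ : AddChar (ZMod t) ℂ) {u : R}

theorem twistedOrbitSum_mul_pow (ψ : AddChar R ℂ) (hu : u ^ t = 1) (μ : R) (m : ℕ) :
    twistedOrbitSum ψ χ u (μ * u ^ m) = χ (-m) * twistedOrbitSum ψ χ u μ := by
  rw [twistedOrbitSum, twistedOrbitSum, mul_sum]
  refine Fintype.sum_equiv (Equiv.addLeft (m : ZMod t)) _ _ fun j => ?_
  rw [Equiv.coe_addLeft, ZMod.pow_val_add hu, ZMod.pow_val_natCast hu, ← mul_assoc,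
    ← AddChar.map_add_eq_mul, neg_add_cancel_left, mul_assoc]

theorem norm_twistedOrbitSum_mul_pow (ψ : AddChar R ℂ) (hu : u ^ t = 1) (μ : R) (m : ℕ) :
    ‖twistedOrbitSum ψ χ u (μ * u ^ m)‖ = ‖twistedOrbitSum ψ χ u μ‖ := by
  rw [twistedOrbitSum_mul_pow χ ψ hu, norm_mul, AddChar.norm_apply, one_mul]

variable [Fintype R] [DecidableEq R] {ψ : AddChar R ℂ}

theorem card_mul_norm_twistedOrbitSum_pow_four_le (hψ : ψ.IsPrimitive) (hu : orderOf u = t)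
    (l : Rˣ) :
    t * ‖twistedOrbitSum ψ χ u l‖ ^ 4
      ≤ Fintype.card R * addEnergy ((range t).image (u ^ ·)) ((range t).image (u ^ ·)) := by
  have hut : u ^ t = 1 := hu ▸ pow_orderOf_eq_one u
  have pow_injOn : Set.InjOn (u ^ ·) (Set.Iio t) := hu ▸ pow_injOn_Iio_orderOf
  have orbit_injOn : Set.InjOn (fun m => (l : R) * u ^ m) (range t) := fun m hm n hn hmn =>
    pow_injOn (by simpa using hm) (by simpa using hn) (l.isUnit.mul_left_cancel hmn)
  have val_injOn : Set.InjOn (fun j : ZMod t => u ^ j.val) (univ : Finset (ZMod t)) :=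
    fun i _ j _ hij => ZMod.val_injective t (pow_injOn i.val_lt j.val_lt hij)
  calc (t : ℝ) * ‖twistedOrbitSum ψ χ u l‖ ^ 4
      = ∑ m ∈ range t, ‖twistedOrbitSum ψ χ u (l * u ^ m)‖ ^ 4 := by
        simp [norm_twistedOrbitSum_mul_pow χ ψ hut]
    _ = ∑ ν ∈ (range t).image (fun m => (l : R) * u ^ m), ‖twistedOrbitSum ψ χ u ν‖ ^ 4 :=
        (sum_image (f := fun ν => ‖twistedOrbitSum ψ χ u ν‖ ^ 4) orbit_injOn).symm
    _ ≤ ∑ ν, ‖twistedOrbitSum ψ χ u ν‖ ^ 4 :=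
        sum_le_univ_sum_of_nonneg fun _ => by positivity
    _ ≤ Fintype.card R * addEnergy ((range t).image (u ^ ·)) ((range t).image (u ^ ·)) := by
        rw [← ZMod.image_pow_val]
        exact hψ.sum_norm_sum_mul_pow_four_le univ val_injOn χ fun j _ => (χ.norm_apply j).le

theorem norm_twistedOrbitSum_le (hψ : ψ.IsPrimitive) (hu : orderOf u = t) (l : Rˣ) :
    ‖twistedOrbitSum ψ χ u l‖
      ≤ (Fintype.card R : ℝ) ^ ((1 : ℝ) / 4) * (t : ℝ) ^ (-(1 : ℝ) / 4) *
          (addEnergy ((range t).image (u ^ ·)) ((range t).image (u ^ ·)) : ℝ) ^ ((1 : ℝ) / 4) := by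
  set E : ℝ := (addEnergy ((range t).image (u ^ ·)) ((range t).image (u ^ ·)) : ℝ)
  have ht : (0 : ℝ) < t := Nat.cast_pos.mpr (NeZero.pos t)
  have fourth_power : ‖twistedOrbitSum ψ χ u l‖ ^ 4 ≤ Fintype.card R * E / t := by
    rw [le_div_iff₀ ht, mul_comm]
    exact card_mul_norm_twistedOrbitSum_pow_four_le χ hψ hu l
  calc ‖twistedOrbitSum ψ χ u l‖ = (‖twistedOrbitSum ψ χ u l‖ ^ 4) ^ ((1 : ℝ) / 4) := by
        rw [← Real.rpow_natCast, ← Real.rpow_mul (norm_nonneg _)]; norm_num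
    _ ≤ (Fintype.card R * E / t) ^ ((1 : ℝ) / 4) := by gcongr
    _ = _ := by
        rw [div_rpow (by positivity) ht.le, mul_rpow (by positivity) (by positivity),
          show -(1 : ℝ) / 4 = -(1 / 4) by ring, rpow_neg ht.le]
        ring

end TwistedOrbitSum

theorem ep_eq_stdAddChar (p : ℕ) [NeZero p] (z : ZMod p) : ep p z = ZMod.stdAddChar z := by
  rw [ZMod.stdAddChar_apply, ZMod.toCircle_apply]; rfl

theorem stmt_11 :
    ∃ C > 0, ∀ (p : ℕ), p.Prime → ∀ (g l : (ZMod p)ˣ) (t : ℕ), orderOf g = t → 2 ≤ t →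
      ∀ N : ℕ, N ≤ t →
      ‖∑ n ∈ Finset.Icc 1 N, ep p ((l : ZMod p) * (g : ZMod p) ^ n)‖
        ≤ C * (p : ℝ) ^ ((1 : ℝ) / 4) * (t : ℝ) ^ (-(1 : ℝ) / 4) *
          ((Finset.addEnergy ((Finset.range t).image fun n => (g : ZMod p) ^ n)
              ((Finset.range t).image fun n => (g : ZMod p) ^ n) : ℝ)) ^ ((1 : ℝ) / 4) *
          Real.log t := by
  refine ⟨5, by norm_num, fun p hp g l t hg ht N hN => ?_⟩
  have : Fact p.Prime := ⟨hp⟩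
  have : NeZero t := ⟨by omega⟩
  have hu : orderOf (g : ZMod p) = t := orderOf_units.trans hg
  set M := (p : ℝ) ^ ((1 : ℝ) / 4) * (t : ℝ) ^ (-(1 : ℝ) / 4) *
    ((addEnergy ((range t).image fun n => (g : ZMod p) ^ n)
      ((range t).image fun n => (g : ZMod p) ^ n) : ℝ)) ^ ((1 : ℝ) / 4) with hM
  set Φ : ZMod t → ℂ := fun j => ZMod.stdAddChar ((l : ZMod p) * (g : ZMod p) ^ j.val)
  have sum_eq : ∑ n ∈ Icc 1 N, ep p ((l : ZMod p) * (g : ZMod p) ^ n) = ∑ n ∈ Icc 1 N, Φ n := by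
    simp only [Φ, ep_eq_stdAddChar, ZMod.pow_val_natCast (hu ▸ pow_orderOf_eq_one _)]
  have dft_le : ∀ k, ‖ZMod.dft Φ k‖ ≤ M := fun k => by
    convert norm_twistedOrbitSum_le ((ZMod.stdAddChar (N := t)).mulShift (-k))
      (ZMod.isPrimitive_stdAddChar p) hu l using 2
    · simp only [ZMod.dft_apply, twistedOrbitSum, AddChar.mulShift_apply, smul_eq_mul, Φ,
        neg_mul, mul_comm k]
    · rw [ZMod.card]
  have hlog : (1 / 2 : ℝ) ≤ log t := by
    have := log_le_log two_pos (show (2 : ℝ) ≤ t by exact_mod_cast ht)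
    linarith [log_two_gt_d9]
  calc ‖∑ n ∈ Icc 1 N, ep p ((l : ZMod p) * (g : ZMod p) ^ n)‖
      ≤ M / t * (t * (2 + log t)) := by
        rw [sum_eq]
        refine (ZMod.norm_sum_le_of_norm_dft_le Φ dft_le _).trans ?_
        gcongr
        exact ZMod.sum_norm_sum_Icc_stdAddChar_mul_le hN
    _ = M * (2 + log t) := by field_simp
    _ ≤ 5 * M * log t := by nlinarith [show 0 ≤ M by positivity]
    _ = _ := by rw [hM]; ring
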